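/- Let F ⊆ ℝ^d be a non-empty compact set, let Φ = {φ_i}_{i∈Λ} be a similarity IFS which satisfies the open set condition, and let T ∈ 𝒯'_Λ be a tree with no leaves such that F = Γ_Φ(T). Suppose S ∈ cl(S_Φ^T) and ψ is a similarity map such that ψ⁻¹(Q) ∩ S ⊆ U for some OSC set U. Then there exist finitely many microsets A_1, …, A_k of F and similarity maps χ_1, …, χ_k such that Q ∩ ψ(S) = ⋃_{j=1}^k χ_j(A_j). -/

import Mathlib

open Metric Filter Set
open scoped ENNReal NNReal

noncomputable section

abbrev Euc (d : ℕ) : Type := EuclideanSpace ℝ (Fin d)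

/-- `f : ℝ^d → ℝ^d` is a similarity with scaling ratio `r`. -/
def IsSimilarityWithRatio {d : ℕ} (f : Euc d → Euc d) (r : ℝ) : Prop :=
  ∀ x y : Euc d, dist (f x) (f y) = r * dist x y

/-- `f` is a similarity map (with some positive scaling ratio). -/
def IsSimilarity {d : ℕ} (f : Euc d → Euc d) : Prop :=
  ∃ r : ℝ, 0 < r ∧ IsSimilarityWithRatio f r

/-- `f` is an expanding similarity map (scaling ratio `≥ 1`). -/
def IsExpandingSimilarity {d : ℕ} (f : Euc d → Euc d) : Prop :=
  ∃ r : ℝ, 1 ≤ r ∧ IsSimilarityWithRatio f r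

/-- `f` is a contracting similarity map with ratio `r ∈ (0,1)`. -/
def IsContractingSimilarity {d : ℕ} (f : Euc d → Euc d) (r : ℝ) : Prop :=
  0 < r ∧ r < 1 ∧ IsSimilarityWithRatio f r

/-- The closed unit cube `Q = [0,1]^d`. -/
def unitCube (d : ℕ) : Set (Euc d) := {x | ∀ i, x i ∈ Set.Icc (0:ℝ) 1}

/-- A miniset of `F`: a non-empty set of the form `Q ∩ ψ(F)` with `ψ` an expanding similarity. -/
def IsMiniset {d : ℕ} (F M : Set (Euc d)) : Prop :=
  M.Nonempty ∧ ∃ ψ : Euc d → Euc d, IsExpandingSimilarity ψ ∧ M = unitCube d ∩ ψ '' F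

/-- A microset of `F`: a limit of minisets of `F` in the Hausdorff metric. -/
def IsMicroset {d : ℕ} (F M : Set (Euc d)) : Prop :=
  IsCompact M ∧ M.Nonempty ∧ ∃ A : ℕ → Set (Euc d), (∀ n, IsMiniset F (A n)) ∧
    Tendsto (fun n => hausdorffDist (A n) M) atTop (nhds 0)

/-- A tree with alphabet `Λ`: a prefix-closed set of finite words containing the empty word. -/
def IsTree {Λ : Type} (T : Set (List Λ)) : Prop :=
  ([] : List Λ) ∈ T ∧ ∀ w ∈ T, ∀ v : List Λ, v <+: w → v ∈ T

/-- Every word of `T` has a one-letter extension in `T`. -/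
def HasNoLeaves {Λ : Type} (T : Set (List Λ)) : Prop :=
  ∀ w ∈ T, ∃ a : Λ, w ++ [a] ∈ T

/-- The boundary `∂T` of a tree: infinite words all of whose finite prefixes lie in `T`. -/
def treeBoundary {Λ : Type} (T : Set (List Λ)) : Set (ℕ → Λ) :=
  {x | ∀ n : ℕ, (List.ofFn fun i : Fin n => x i) ∈ T}

/-- The descendant tree `T^v = {w : vw ∈ T}`. -/
def descTree {Λ : Type} (T : Set (List Λ)) (v : List Λ) : Set (List Λ) :=
  {w | v ++ w ∈ T}

/-- The composition `φ_w = φ_{w₁} ∘ ⋯ ∘ φ_{w_k}` for a finite word `w`. -/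
def wordMap {X : Type} {Λ : Type} (Φ : Λ → X → X) (w : List Λ) : X → X :=
  fun z => w.foldr (fun a y => Φ a y) z

/-- The coding map `γ_Φ(i) = lim_n φ_{i₁} ∘ ⋯ ∘ φ_{iₙ}(0)`. -/
def codeMap {d : ℕ} {Λ : Type} (Φ : Λ → Euc d → Euc d) (x : ℕ → Λ) : Euc d :=
  limUnder atTop (fun n => wordMap Φ (List.ofFn fun i : Fin n => x i) 0)

/-- `Γ_Φ(T) = γ_Φ(∂T)`. -/
def treeProj {d : ℕ} {Λ : Type} (Φ : Λ → Euc d → Euc d) (T : Set (List Λ)) : Set (Euc d) :=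
  codeMap Φ '' treeBoundary T

/-- The collection `S_Φ^T = {Γ_Φ(T^v) : v ∈ T}`. -/
def branchSets {d : ℕ} {Λ : Type} (Φ : Λ → Euc d → Euc d) (T : Set (List Λ)) :
    Set (Set (Euc d)) :=
  {A | ∃ v ∈ T, A = treeProj Φ (descTree T v)}

/-- `A` belongs to the closure of `S_Φ^T` in the Hausdorff metric: `A` is a non-empty compact
set which is a Hausdorff-metric limit of a sequence of sets `Γ_Φ(T^{vₙ})`, `vₙ ∈ T`. -/
def inClosureBranchSets {d : ℕ} {Λ : Type} (Φ : Λ → Euc d → Euc d) (T : Set (List Λ))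
    (A : Set (Euc d)) : Prop :=
  IsCompact A ∧ A.Nonempty ∧ ∃ v : ℕ → List Λ, (∀ n, v n ∈ T) ∧
    Tendsto (fun n => hausdorffDist (treeProj Φ (descTree T (v n))) A) atTop (nhds 0)

/-- The scaling ratio `r_w = r_{w₁} ⋯ r_{w_k}` of a word. -/
def wordRatio {Λ : Type} (r : Λ → ℝ) (w : List Λ) : ℝ := (w.map r).prod

/-- The section `Π_ρ = {w : r_w ≤ ρ < r_{w₁⋯w_{|w|-1}}}`. -/
def sectionPi {Λ : Type} (r : Λ → ℝ) (ρ : ℝ) : Set (List Λ) :=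
  {w | wordRatio r w ≤ ρ ∧ ρ < wordRatio r w.dropLast}

/-- `r_min = min_{i ∈ Λ} r_i`. -/
def rMin {Λ : Type} [Fintype Λ] [Nonempty Λ] (r : Λ → ℝ) : ℝ :=
  Finset.univ.inf' Finset.univ_nonempty r

/-- The weak separation condition: there is `c ∈ ℕ` such that for every `ρ ∈ (0, r_min)`,
every closed ball of radius `ρ` intersects at most `c` distinct sets among
`{φ_w(K) : w ∈ Π_ρ}` (identical sets counted once). -/
def SatisfiesWSC {d : ℕ} {Λ : Type} [Fintype Λ] [Nonempty Λ] (Φ : Λ → Euc d → Euc d)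
    (r : Λ → ℝ) (K : Set (Euc d)) : Prop :=
  ∃ c : ℕ, ∀ ρ : ℝ, 0 < ρ → ρ < rMin r → ∀ x : Euc d,
    ∃ V : Finset (Set (Euc d)), V.card ≤ c ∧
      ∀ w ∈ sectionPi r ρ, (wordMap Φ w '' K ∩ closedBall x ρ).Nonempty →
        wordMap Φ w '' K ∈ V

/-- The strong separation condition. -/
def SatisfiesSSC {d : ℕ} {Λ : Type} (Φ : Λ → Euc d → Euc d) (K : Set (Euc d)) : Prop :=
  ∀ i j : Λ, i ≠ j → (Φ i '' K) ∩ (Φ j '' K) = ∅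

/-- `U` is an OSC set for `Φ`. -/
def IsOSCSet {d : ℕ} {Λ : Type} (Φ : Λ → Euc d → Euc d) (U : Set (Euc d)) : Prop :=
  U.Nonempty ∧ IsOpen U ∧ (∀ i, Φ i '' U ⊆ U) ∧
    ∀ i j : Λ, i ≠ j → (Φ i '' U) ∩ (Φ j '' U) = ∅

/-- The open set condition. -/
def SatisfiesOSC {d : ℕ} {Λ : Type} (Φ : Λ → Euc d → Euc d) : Prop :=
  ∃ U : Set (Euc d), IsOSCSet Φ U

/-- `K` is the attractor of the IFS `Φ`. -/
def IsAttractor {d : ℕ} {Λ : Type} (Φ : Λ → Euc d → Euc d) (K : Set (Euc d)) : Prop :=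
  IsCompact K ∧ K.Nonempty ∧ K = ⋃ i : Λ, Φ i '' K

/-!
Cover `Q ∩ ψ(S)` by finitely many windows `cube c t ∩ ψ(S)` of half-side `t` contained in `Q`.
Each window is a similar copy of its rescaling to `Q`, so it suffices that this rescaling is a
microset of `F = Γ(T)`. Write `S` as a Hausdorff limit of `Γ(T^{v_n})`. Once `t` is small, `ψ⁻¹`
of a slightly enlarged window lies in the OSC set `U`, and a point of `U` that `φ_v` maps into
`Γ(T)` is already coded in `T^v`; so near the window, `ψ(Γ(T^{v_n}))` coincides with the copy
`ψ φ_{v_n}⁻¹(F)` of `F`, which is expanding after rescaling as soon as `4t ≤ ratio(ψ)`. These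
rescaled windows of copies of `F` are the minisets converging to the rescaled window of `ψ(S)`.
-/

open Topology

namespace IsSimilarityWithRatio

variable {d : ℕ} {f g : Euc d → Euc d} {r s : ℝ}

theorem lipschitzWith (hf : IsSimilarityWithRatio f r) : LipschitzWith (Real.toNNReal r) f :=
  LipschitzWith.of_dist_le_mul fun x y => by
    rw [hf]; exact mul_le_mul_of_nonneg_right (Real.le_coe_toNNReal r) dist_nonneg

theorem continuous (hf : IsSimilarityWithRatio f r) : Continuous f :=
  hf.lipschitzWith.continuous

theorem comp (hf : IsSimilarityWithRatio f r) (hg : IsSimilarityWithRatio g s) :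
    IsSimilarityWithRatio (f ∘ g) (r * s) := fun x y => by
  rw [Function.comp_apply, Function.comp_apply, hf, hg, mul_assoc]

theorem injective (hf : IsSimilarityWithRatio f r) (hr : 0 < r) : Function.Injective f :=
  fun x y hxy => dist_eq_zero.mp <| by
    simpa [hr.ne'] using (hf x y).symm.trans (dist_eq_zero.mpr hxy)

/-- `r⁻¹ • f` is an isometry, hence affine (the target is strictly convex), hence onto in
finite dimension. -/
theorem surjective (hf : IsSimilarityWithRatio f r) (hr : 0 < r) : Function.Surjective f := by
  have he : Isometry fun x => r⁻¹ • f x := Isometry.of_dist_eq fun x y => by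
    rw [dist_smul₀, hf, Real.norm_of_nonneg (inv_nonneg.mpr hr.le), inv_mul_cancel_left₀ hr.ne']
  intro y
  obtain ⟨x, hx⟩ :=
    (he.affineIsometryOfStrictConvexSpace.toAffineIsometryEquiv rfl).surjective (r⁻¹ • y)
  exact ⟨x, smul_right_injective _ (inv_ne_zero hr.ne') hx⟩

theorem exists_inverse (hf : IsSimilarityWithRatio f r) (hr : 0 < r) :
    ∃ g, IsSimilarityWithRatio g r⁻¹ ∧ Function.LeftInverse g f ∧ Function.RightInverse g f := by
  have hleft := Function.leftInverse_invFun (hf.injective hr)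
  have hright := Function.rightInverse_invFun (hf.surjective hr)
  refine ⟨Function.invFun f, fun x y => ?_, hleft, hright⟩
  have := hf (Function.invFun f x) (Function.invFun f y)
  rw [hright x, hright y] at this
  rw [this, inv_mul_cancel_left₀ hr.ne']

theorem isOpen_image (hf : IsSimilarityWithRatio f r) (hr : 0 < r) {U : Set (Euc d)}
    (hU : IsOpen U) : IsOpen (f '' U) := by
  obtain ⟨g, hg, hgf, hfg⟩ := hf.exists_inverse hr
  rw [image_eq_preimage_of_inverse hgf hfg]
  exact hU.preimage hg.continuous

theorem image_subset_thickening (hf : IsSimilarityWithRatio f r) (hr : 0 < r)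
    {A B : Set (Euc d)} {ε : ℝ} (h : A ⊆ thickening ε B) :
    f '' A ⊆ thickening (r * ε) (f '' B) := by
  rintro _ ⟨x, hx, rfl⟩
  obtain ⟨y, hy, hxy⟩ := mem_thickening_iff.mp (h hx)
  exact mem_thickening_iff.mpr ⟨f y, mem_image_of_mem f hy, by rw [hf]; gcongr⟩

theorem smul_sub_add {a : ℝ} (ha : 0 < a) (c w : Euc d) :
    IsSimilarityWithRatio (fun x => a • (x - c) + w) a := fun x y => by
  rw [dist_add_right, dist_smul₀, dist_sub_right, Real.norm_of_nonneg ha.le]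

end IsSimilarityWithRatio

section Cube

variable {d : ℕ}

def cube (c : Euc d) (s : ℝ) : Set (Euc d) := {x | ∀ i, dist (x i) (c i) ≤ s}

def unitCubeCenter (d : ℕ) : Euc d := WithLp.toLp 2 fun _ => 2⁻¹

theorem unitCube_eq_cube : unitCube d = cube (unitCubeCenter d) 2⁻¹ := by
  ext x
  refine forall_congr' fun i => ?_
  simp only [unitCubeCenter, Real.dist_eq, abs_sub_le_iff, mem_Icc]
  constructor <;> intro h <;> constructor <;> linarith [h.1, h.2]

theorem isClosed_cube (c : Euc d) (s : ℝ) : IsClosed (cube c s) := by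
  simp only [cube, ofPred_forall]
  exact isClosed_iInter fun i => isClosed_le (by fun_prop) continuous_const

theorem isClosed_unitCube : IsClosed (unitCube d) :=
  unitCube_eq_cube (d := d) ▸ isClosed_cube _ _

theorem cube_mono {c : Euc d} {s s' : ℝ} (h : s ≤ s') : cube c s ⊆ cube c s' :=
  fun _ hx i => (hx i).trans h

theorem mem_cube_add_of_dist_le {c x y : Euc d} {s m : ℝ} (hx : x ∈ cube c s)
    (hxy : dist y x ≤ m) : y ∈ cube c (s + m) := fun i =>
  calc dist (y i) (c i) ≤ dist (y i) (x i) + dist (x i) (c i) := dist_triangle _ _ _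
    _ ≤ m + s := add_le_add ((PiLp.dist_apply_le y x i).trans hxy) (hx i)
    _ = s + m := add_comm m s

theorem dist_le_of_mem_cube {c x : Euc d} {s : ℝ} (hs : 0 ≤ s) (hx : x ∈ cube c s) :
    dist x c ≤ √d * s := by
  rw [EuclideanSpace.dist_eq]
  calc √(∑ i, dist (x i) (c i) ^ 2) ≤ √(∑ _i : Fin d, s ^ 2) :=
        Real.sqrt_le_sqrt (Finset.sum_le_sum fun i _ => pow_le_pow_left₀ dist_nonneg (hx i) 2)
    _ = √d * s := by simp [Real.sqrt_sq hs]

def cubeChart (c : Euc d) (s : ℝ) (x : Euc d) : Euc d := (2 * s)⁻¹ • (x - c) + unitCubeCenter d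

theorem cubeChart_isSimilarity (c : Euc d) {s : ℝ} (hs : 0 < s) :
    IsSimilarityWithRatio (cubeChart c s) (2 * s)⁻¹ :=
  IsSimilarityWithRatio.smul_sub_add (by positivity) c _

theorem preimage_cubeChart_unitCube (c : Euc d) {s : ℝ} (hs : 0 < s) :
    cubeChart c s ⁻¹' unitCube d = cube c s := by
  ext x
  rw [unitCube_eq_cube]
  refine forall_congr' fun i => ?_
  simp only [cubeChart, unitCubeCenter, PiLp.add_apply, PiLp.smul_apply, PiLp.sub_apply,
    smul_eq_mul, Real.dist_eq]
  rw [add_sub_cancel_right, abs_mul, abs_inv, abs_of_pos (by positivity : (0:ℝ) < 2 * s),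
    inv_mul_le_iff₀ (by positivity)]
  constructor <;> intro h <;> linarith

theorem leftInverse_cubeChart (c : Euc d) {s : ℝ} (hs : s ≠ 0) :
    Function.LeftInverse (fun y => (2 * s) • (y - unitCubeCenter d) + c) (cubeChart c s) :=
  fun x => by
  simp only [cubeChart, add_sub_cancel_right, smul_smul,
    mul_inv_cancel₀ (mul_ne_zero two_ne_zero hs), one_smul, sub_add_cancel]

theorem dist_cubeChart_cubeChart (c x : Euc d) {s s' : ℝ} :
    dist (cubeChart c s x) (cubeChart c s' x) = |(2 * s)⁻¹ - (2 * s')⁻¹| * dist x c := by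
  rw [cubeChart, cubeChart, dist_add_right, dist_eq_norm, ← sub_smul, norm_smul,
    Real.norm_eq_abs, dist_eq_norm]

theorem IsSimilarityWithRatio.preimage_cube_subset_cthickening {ψ : Euc d → Euc d} {R : ℝ}
    (hψ : IsSimilarityWithRatio ψ R) (hR : 0 < R) {K : Set (Euc d)} {c x : Euc d}
    {s : ℝ} (hs : 0 ≤ s) (hx : x ∈ K) (hψx : ψ x ∈ cube c s) :
    ψ ⁻¹' cube c s ⊆ cthickening (2 * (√d * s) / R) K := fun z hz => by
  refine mem_cthickening_of_dist_le z x _ K hx ?_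
  rw [le_div_iff₀' hR, ← hψ]
  linarith [dist_triangle_right (ψ z) (ψ x) c, dist_le_of_mem_cube hs hz,
    dist_le_of_mem_cube hs hψx]

end Cube

section Clamp

variable {d : ℕ}

def clampCenter (t : ℝ) (y : Euc d) : Euc d := WithLp.toLp 2 fun i => max t (min (y i) (1 - t))

theorem cube_clampCenter_subset_unitCube {t : ℝ} (ht : 2 * t ≤ 1) (y : Euc d) :
    cube (clampCenter t y) t ⊆ unitCube d := fun x hx i => by
  have h := abs_sub_le_iff.mp ((Real.dist_eq _ _).symm.trans_le (hx i))
  simp only [clampCenter] at h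
  constructor <;> cases le_total t (min (y i) (1 - t)) <;> simp_all [max_def, min_def] <;>
    split_ifs at * <;> linarith

theorem mem_cube_clampCenter {t : ℝ} {x y : Euc d} (hx : x ∈ unitCube d)
    (hxy : dist x y < t / 2) : x ∈ cube (clampCenter t y) t := fun i => by
  have hxyi := (PiLp.dist_apply_le x y i).trans_lt hxy
  rw [Real.dist_eq, abs_sub_lt_iff] at hxyi
  rw [Real.dist_eq, abs_sub_le_iff]
  have := hx i
  simp only [clampCenter, mem_Icc] at this ⊢
  constructor <;> simp only [max_def, min_def] <;> split_ifs <;> linarith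

theorem mem_cube_clampCenter_self {t : ℝ} (ht : 0 < t) {y : Euc d} (hy : y ∈ unitCube d) :
    y ∈ cube (clampCenter t y) t :=
  mem_cube_clampCenter hy (by rw [dist_self]; positivity)

theorem exists_finset_unitCube_inter_eq_biUnion {Z : Set (Euc d)} (hZ : IsCompact Z) {t : ℝ}
    (ht : 0 < t) (ht1 : 2 * t ≤ 1) :
    ∃ Y : Finset (Euc d), (∀ y ∈ Y, y ∈ unitCube d ∩ Z) ∧
      unitCube d ∩ Z = ⋃ y ∈ Y, cube (clampCenter t y) t ∩ Z := by
  obtain ⟨Y, hYZ, hcover⟩ := (hZ.inter_left isClosed_unitCube).elim_nhds_subcover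
    (fun y => ball y (t / 2)) fun y _ => ball_mem_nhds y (by positivity)
  refine ⟨Y, hYZ, subset_antisymm (fun x hx => ?_) (iUnion₂_subset fun y _ =>
    inter_subset_inter_left _ (cube_clampCenter_subset_unitCube ht1 y))⟩
  obtain ⟨y, hy, hxy⟩ := mem_iUnion₂.mp (hcover hx)
  exact mem_iUnion₂.mpr ⟨y, hy, mem_cube_clampCenter hx.1 hxy, hx.2⟩

end Clamp

section Hausdorff

variable {α β : Type*} [PseudoMetricSpace α] [PseudoMetricSpace β]

theorem exists_tendsto_zero_subset_thickening {A : ℕ → Set α} {B : Set α}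
    (hfin : ∀ n, hausdorffEDist (A n) B ≠ ⊤)
    (h : Tendsto (fun n => hausdorffDist (A n) B) atTop (𝓝 0)) :
    ∃ ε : ℕ → ℝ, Tendsto ε atTop (𝓝 0) ∧
      ∀ n, 0 < ε n ∧ A n ⊆ thickening (ε n) B ∧ B ⊆ thickening (ε n) (A n) := by
  refine ⟨fun n => hausdorffDist (A n) B + 1 / (n + 1), by
    simpa using h.add tendsto_one_div_add_atTop_nhds_zero_nat, fun n => ?_⟩
  have hlt : hausdorffDist (A n) B < hausdorffDist (A n) B + 1 / (n + 1) :=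
    lt_add_of_pos_right _ Nat.one_div_pos_of_nat
  refine ⟨hausdorffDist_nonneg.trans_lt hlt, fun x hx => ?_, fun y hy => ?_⟩
  · exact mem_thickening_iff.mpr (exists_dist_lt_of_hausdorffDist_lt hx hlt (hfin n))
  · obtain ⟨x, hx, hxy⟩ := exists_dist_lt_of_hausdorffDist_lt' hy hlt (hfin n)
    exact mem_thickening_iff.mpr ⟨x, hx, by rwa [dist_comm]⟩

theorem tendsto_hausdorffDist_image {ι : Type*} {l : Filter ι} {A : ι → Set α} {B : Set α}
    {f : ι → α → β} {g : α → β} {K : ℝ≥0} (hf : ∀ n, LipschitzWith K (f n))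
    (hfg : TendstoUniformlyOn f g l B)
    (hA : ∀ ε > 0, ∀ᶠ n in l, A n ⊆ thickening ε B ∧ B ⊆ thickening ε (A n)) :
    Tendsto (fun n => hausdorffDist (f n '' A n) (g '' B)) l (𝓝 0) := by
  rw [Metric.tendsto_nhds]
  intro ε hε
  have hε' : 0 < ε / (4 * (K + 1)) := by positivity
  have hK : K * (ε / (4 * (K + 1))) ≤ ε / 4 := by
    rw [mul_div_assoc', div_le_div_iff₀ (by positivity) (by norm_num)]
    nlinarith
  filter_upwards [hA _ hε', Metric.tendstoUniformlyOn_iff.mp hfg (ε / 4) (by positivity)]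
    with n ⟨hAB, hBA⟩ hunif
  have key : ∀ a b, b ∈ B → dist a b < ε / (4 * (K + 1)) → dist (f n a) (g b) ≤ ε / 2 :=
    fun a b hb hab =>
    calc dist (f n a) (g b) ≤ dist (f n a) (f n b) + dist (g b) (f n b) :=
          dist_triangle_right _ _ _
      _ ≤ K * dist a b + ε / 4 := add_le_add ((hf n).dist_le_mul a b) (hunif b hb).le
      _ ≤ ε / 2 := by nlinarith [mul_le_mul_of_nonneg_left hab.le K.coe_nonneg]
  have hle : hausdorffDist (f n '' A n) (g '' B) ≤ ε / 2 := by
    refine hausdorffDist_le_of_mem_dist (by positivity) ?_ ?_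
    · rintro _ ⟨a, ha, rfl⟩
      obtain ⟨b, hb, hab⟩ := mem_thickening_iff.mp (hAB ha)
      exact ⟨g b, mem_image_of_mem g hb, key a b hb hab⟩
    · rintro _ ⟨b, hb, rfl⟩
      obtain ⟨a, ha, hba⟩ := mem_thickening_iff.mp (hBA hb)
      exact ⟨f n a, mem_image_of_mem _ ha, by rw [dist_comm]; exact key a b hb (by rwa [dist_comm])⟩
  rw [Real.dist_eq, sub_zero, abs_of_nonneg hausdorffDist_nonneg]
  linarith

end Hausdorff

section Window

variable {d : ℕ}

theorem cube_inter_subset_thickening {Z₁ Z₂ : Set (Euc d)} {c : Euc d} {s m : ℝ}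
    (h : Z₁ ⊆ thickening m Z₂) : cube c s ∩ Z₁ ⊆ thickening m (cube c (s + m) ∩ Z₂) := by
  rintro x ⟨hxc, hxZ⟩
  obtain ⟨z, hz, hxz⟩ := mem_thickening_iff.mp (h hxZ)
  exact mem_thickening_iff.mpr
    ⟨z, ⟨mem_cube_add_of_dist_le hxc (by rw [dist_comm]; exact hxz.le), hz⟩, hxz⟩

/-- The compact sets `cube c (t + δ) ∩ Z` decrease to `cube c t ∩ Z` as `δ → 0`. -/
theorem exists_cube_inter_subset_thickening {Z : Set (Euc d)} (hZ : IsCompact Z) (c : Euc d)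
    (t : ℝ) {ε : ℝ} (hε : 0 < ε) :
    ∃ δ > 0, cube c (t + δ) ∩ Z ⊆ thickening ε (cube c t ∩ Z) := by
  have hanti : Antitone fun k : ℕ => cube c (t + 1 / (k + 1)) ∩ Z := fun k l hkl =>
    inter_subset_inter_left Z (cube_mono (by gcongr))
  obtain ⟨k, hk⟩ := exists_subset_nhds_of_isCompact hanti.directed_ge
    (fun k => hZ.inter_left (isClosed_cube c _)) fun x hx => by
      rw [mem_iInter] at hx
      refine isOpen_thickening.mem_nhds
        (self_subset_thickening hε (cube c t ∩ Z) ⟨fun i => ?_, (hx 0).2⟩)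
      refine le_of_tendsto_of_tendsto' (b := atTop) tendsto_const_nhds ?_ fun k => (hx k).1 i
      simpa using (tendsto_one_div_add_atTop_nhds_zero_nat (𝕜 := ℝ)).const_add t
  exact ⟨1 / (k + 1), Nat.one_div_pos_of_nat, hk⟩

theorem eventually_cube_inter_thickening {Z : Set (Euc d)} {Z' : ℕ → Set (Euc d)} {m : ℕ → ℝ}
    (hZ : IsCompact Z) (hm : Tendsto m atTop (𝓝 0))
    (hclose : ∀ n, Z' n ⊆ thickening (m n) Z ∧ Z ⊆ thickening (m n) (Z' n)) (c : Euc d) (t : ℝ) :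
    ∀ ε > 0, ∀ᶠ n in atTop, cube c (t + m n) ∩ Z' n ⊆ thickening ε (cube c t ∩ Z) ∧
      cube c t ∩ Z ⊆ thickening ε (cube c (t + m n) ∩ Z' n) := by
  intro ε hε
  obtain ⟨δ, hδ, hsub⟩ := exists_cube_inter_subset_thickening hZ c t (half_pos hε)
  filter_upwards [hm.eventually (gt_mem_nhds (half_pos hδ)),
    hm.eventually (gt_mem_nhds (half_pos hε))] with n hmδ hmε
  constructor
  · calc cube c (t + m n) ∩ Z' n ⊆ thickening (m n) (cube c (t + m n + m n) ∩ Z) :=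
          cube_inter_subset_thickening (hclose n).1
      _ ⊆ thickening (m n) (thickening (ε / 2) (cube c t ∩ Z)) :=
          thickening_subset_of_subset _ (subset_trans
            (inter_subset_inter_left Z (cube_mono (by linarith))) hsub)
      _ ⊆ thickening (m n + ε / 2) (cube c t ∩ Z) := thickening_thickening_subset _ _ _
      _ ⊆ thickening ε (cube c t ∩ Z) := thickening_mono (by linarith) _
  · exact (cube_inter_subset_thickening (hclose n).2).trans (thickening_mono (by linarith) _)

end Window

section Microset

variable {d : ℕ}

theorem tendstoUniformlyOn_cubeChart {m : ℕ → ℝ} (hm : Tendsto m atTop (𝓝 0)) (c : Euc d)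
    {t : ℝ} (ht : 0 < t) :
    TendstoUniformlyOn (fun n => cubeChart c (t + m n)) (cubeChart c t) atTop (cube c t) := by
  have hinv : Tendsto (fun n => (2 * (t + m n))⁻¹) atTop (𝓝 (2 * t)⁻¹) := by
    simpa using ((hm.const_add t).const_mul 2).inv₀ (by positivity)
  have hsup : Tendsto (fun n => |(2 * t)⁻¹ - (2 * (t + m n))⁻¹| * (√d * t)) atTop (𝓝 0) := by
    simpa using (((tendsto_const_nhds (x := (2 * t)⁻¹)).sub hinv).abs.mul_const (√d * t))
  refine Metric.tendstoUniformlyOn_iff.mpr fun ε hε => ?_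
  filter_upwards [hsup.eventually (gt_mem_nhds hε)] with n hn x hx
  rw [dist_cubeChart_cubeChart]
  exact (mul_le_mul_of_nonneg_left (dist_le_of_mem_cube ht.le hx) (abs_nonneg _)).trans_lt hn

/-- The minisets are the windows `cube c (t + m n)` of `σ n '' F` rescaled to the unit cube;
enlarging the window by the approximation rate `m n` keeps the points of `Z` near its boundary. -/
theorem isMicroset_cubeChart_image {F Z : Set (Euc d)} {Z' : ℕ → Set (Euc d)}
    {σ : ℕ → Euc d → Euc d} {ρ m : ℕ → ℝ} {c : Euc d} {t : ℝ} (ht : 0 < t)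
    (hσ : ∀ n, IsSimilarityWithRatio (σ n) (ρ n)) (hρ : ∀ n, 4 * t ≤ ρ n)
    (hm : Tendsto m atTop (𝓝 0)) (hm0 : ∀ n, 0 ≤ m n) (hmt : ∀ n, m n ≤ t)
    (hwin : ∀ n, cube c (t + m n) ∩ σ n '' F = cube c (t + m n) ∩ Z' n)
    (hZ : IsCompact Z) (hclose : ∀ n, Z' n ⊆ thickening (m n) Z ∧ Z ⊆ thickening (m n) (Z' n))
    (hD : (cube c t ∩ Z).Nonempty) :
    IsMicroset F (cubeChart c t '' (cube c t ∩ Z)) := by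
  have htm : ∀ n, 0 < t + m n := fun n => by linarith [hm0 n]
  have hA : ∀ n, unitCube d ∩ (cubeChart c (t + m n) ∘ σ n) '' F =
      cubeChart c (t + m n) '' (cube c (t + m n) ∩ Z' n) := fun n => by
    rw [image_comp, inter_comm, ← image_inter_preimage, preimage_cubeChart_unitCube c (htm n),
      inter_comm, hwin]
  refine ⟨(hZ.inter_left (isClosed_cube c t)).image (cubeChart_isSimilarity c ht).continuous,
    hD.image _, _, fun n => ⟨?_, _, ⟨_, ?_, (cubeChart_isSimilarity c (htm n)).comp (hσ n)⟩, rfl⟩,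
    ?_⟩
  · obtain ⟨y, hy⟩ := hD
    obtain ⟨z, hz, -⟩ := mem_thickening_iff.mp (cube_inter_subset_thickening (hclose n).2 hy)
    rw [hA]
    exact ⟨_, mem_image_of_mem _ hz⟩
  · rw [le_inv_mul_iff₀ (by linarith [htm n])]
    linarith [hρ n, hmt n]
  · simp only [hA]
    refine tendsto_hausdorffDist_image (K := Real.toNNReal (2 * t)⁻¹) (fun n => ?_)
      ((tendstoUniformlyOn_cubeChart hm c ht).mono inter_subset_left)
      (eventually_cube_inter_thickening hZ hm hclose c t)
    refine (cubeChart_isSimilarity c (htm n)).lipschitzWith.weaken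
      (Real.toNNReal_le_toNNReal ?_)
    gcongr
    linarith [hm0 n]

end Microset

section Coding

variable {d : ℕ} {Λ : Type} {Φ : Λ → Euc d → Euc d} {r : Λ → ℝ}

theorem ofFn_succ_eq_cons (i : ℕ → Λ) (n : ℕ) :
    (List.ofFn fun k : Fin (n + 1) => i k) = i 0 :: List.ofFn fun k : Fin n => i (k + 1) := by
  simp [List.ofFn_succ]

theorem ofFn_succ_eq_append (i : ℕ → Λ) (n : ℕ) :
    (List.ofFn fun k : Fin (n + 1) => i k) = (List.ofFn fun k : Fin n => i k) ++ [i n] := by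
  rw [List.ofFn_succ', List.concat_eq_append]
  rfl

theorem wordMap_append (u w : List Λ) (x : Euc d) :
    wordMap Φ (u ++ w) x = wordMap Φ u (wordMap Φ w x) := by
  simp only [wordMap, List.foldr_append]

theorem mapsTo_wordMap {K : Set (Euc d)} (hK : ∀ a, MapsTo (Φ a) K K) (w : List Λ) :
    MapsTo (wordMap Φ w) K K := by
  induction w with
  | nil => exact mapsTo_id K
  | cons a w ih => exact (hK a).comp ih

variable (hΦ : ∀ a, IsContractingSimilarity (Φ a) (r a))
include hΦ

theorem isSimilarityWithRatio_wordMap (w : List Λ) :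
    IsSimilarityWithRatio (wordMap Φ w) (wordRatio r w) := by
  induction w with
  | nil => intro x y; simp [wordMap, wordRatio]
  | cons a w ih =>
    have h : wordRatio r (a :: w) = r a * wordRatio r w := by simp [wordRatio]
    rw [h]
    exact (hΦ a).2.2.comp ih

theorem wordRatio_pos (w : List Λ) : 0 < wordRatio r w := by
  induction w with
  | nil => simp [wordRatio]
  | cons a w ih => simpa [wordRatio] using mul_pos (hΦ a).1 ih

theorem wordRatio_le_one (w : List Λ) : wordRatio r w ≤ 1 := by
  induction w with
  | nil => simp [wordRatio]
  | cons a w ih =>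
    simpa [wordRatio] using mul_le_one₀ (hΦ a).2.1.le (wordRatio_pos hΦ w).le ih

theorem wordRatio_le_pow {ρ : ℝ} (hρ : ∀ a, r a ≤ ρ) (w : List Λ) :
    wordRatio r w ≤ ρ ^ w.length := by
  induction w with
  | nil => simp [wordRatio]
  | cons a w ih =>
    simpa [wordRatio, pow_succ'] using
      mul_le_mul (hρ a) ih (wordRatio_pos hΦ w).le ((hΦ a).1.le.trans (hρ a))

variable [Finite Λ] [Nonempty Λ]

theorem exists_ratio_bound : ∃ ρ, 0 < ρ ∧ ρ < 1 ∧ ∀ a, r a ≤ ρ :=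
  let ⟨a₀, h⟩ := Finite.exists_max r
  ⟨r a₀, (hΦ a₀).1, (hΦ a₀).2.1, h⟩

theorem tendsto_wordMap_codeMap (i : ℕ → Λ) (x : Euc d) :
    Tendsto (fun n => wordMap Φ (List.ofFn fun k : Fin n => i k) x) atTop
      (𝓝 (codeMap Φ i)) := by
  obtain ⟨ρ, hρ0, hρ1, hρ⟩ := exists_ratio_bound hΦ
  obtain ⟨a₁, hC⟩ := Finite.exists_max fun a => dist (0 : Euc d) (Φ a 0)
  have hpow : ∀ n y z, dist (wordMap Φ (List.ofFn fun k : Fin n => i k) y)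
      (wordMap Φ (List.ofFn fun k : Fin n => i k) z) ≤ ρ ^ n * dist y z := fun n y z => by
    rw [isSimilarityWithRatio_wordMap hΦ]
    simpa using mul_le_mul_of_nonneg_right
      (wordRatio_le_pow hΦ hρ (List.ofFn fun k : Fin n => i k)) (dist_nonneg (x := y) (y := z))
  have hstep : ∀ n, dist (wordMap Φ (List.ofFn fun k : Fin n => i k) 0)
      (wordMap Φ (List.ofFn fun k : Fin (n + 1) => i k) 0) ≤ dist (0 : Euc d) (Φ a₁ 0) * ρ ^ n :=
    fun n => by
    rw [ofFn_succ_eq_append, wordMap_append, mul_comm]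
    exact (hpow n _ _).trans (mul_le_mul_of_nonneg_left (hC _) (pow_nonneg hρ0.le n))
  obtain ⟨L, hL⟩ := cauchySeq_tendsto_of_complete (cauchySeq_of_le_geometric ρ _ hρ1 hstep)
  rw [codeMap, hL.limUnder_eq]
  refine hL.congr_dist (squeeze_zero (fun n => dist_nonneg) (fun n => hpow n 0 x) ?_)
  simpa using (tendsto_pow_atTop_nhds_zero_of_lt_one hρ0.le hρ1).mul_const (dist (0 : Euc d) x)

theorem codeMap_mem_of_mapsTo {K : Set (Euc d)} (hK : IsClosed K) (hmaps : ∀ a, MapsTo (Φ a) K K)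
    {x : Euc d} (hx : x ∈ K) (i : ℕ → Λ) : codeMap Φ i ∈ K :=
  hK.mem_of_tendsto (tendsto_wordMap_codeMap hΦ i x)
    (Eventually.of_forall fun _ => mapsTo_wordMap hmaps _ hx)

theorem codeMap_eq_apply_tail (i : ℕ → Λ) :
    codeMap Φ i = Φ (i 0) (codeMap Φ fun n => i (n + 1)) := by
  refine tendsto_nhds_unique ((tendsto_wordMap_codeMap hΦ i 0).comp (tendsto_add_atTop_nat 1)) ?_
  have h := ((hΦ (i 0)).2.2.continuous.tendsto _).comp
    (tendsto_wordMap_codeMap hΦ (fun n => i (n + 1)) 0)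
  refine h.congr fun n => ?_
  simp only [Function.comp_apply, ofFn_succ_eq_cons]
  rfl

/-- Every code lies in a closed ball mapped into itself by all the `Φ a`. -/
theorem isBounded_treeProj (T : Set (List Λ)) : Bornology.IsBounded (treeProj Φ T) := by
  obtain ⟨ρ, -, hρ1, hρ⟩ := exists_ratio_bound hΦ
  obtain ⟨a₁, hC⟩ := Finite.exists_max fun a => dist (Φ a 0) 0
  set R₀ := dist (Φ a₁ 0) 0 / (1 - ρ)
  have hR₀ : 0 ≤ R₀ := div_nonneg dist_nonneg (by linarith)
  have hmaps : ∀ a, MapsTo (Φ a) (closedBall 0 R₀) (closedBall 0 R₀) := fun a x hx => by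
    rw [mem_closedBall] at hx ⊢
    have hR₀eq : ρ * R₀ + dist (Φ a₁ 0) 0 = R₀ := by
      have : 1 - ρ ≠ 0 := by linarith
      simp only [R₀]; field_simp; ring
    calc dist (Φ a x) 0 ≤ dist (Φ a x) (Φ a 0) + dist (Φ a 0) 0 := dist_triangle _ _ _
      _ ≤ ρ * R₀ + dist (Φ a₁ 0) 0 := by
        rw [(hΦ a).2.2]
        gcongr
        · exact (hΦ a).1.le.trans (hρ a)
        · exact hρ a
        · exact hC a
      _ = R₀ := hR₀eq
  refine (isBounded_closedBall (x := 0) (r := R₀)).subset ?_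
  rintro _ ⟨i, -, rfl⟩
  exact codeMap_mem_of_mapsTo hΦ isClosed_closedBall hmaps (mem_closedBall_self hR₀) i

end Coding

section Tree

variable {d : ℕ} {Λ : Type} {T : Set (List Λ)}

theorem isTree_descTree (hT : IsTree T) {v : List Λ} (hv : v ∈ T) : IsTree (descTree T v) :=
  ⟨by simpa [descTree] using hv, fun _ hw _ hu =>
    hT.2 _ hw _ ((List.prefix_append_right_inj v).mpr hu)⟩

theorem hasNoLeaves_descTree (hTnl : HasNoLeaves T) (v : List Λ) :
    HasNoLeaves (descTree T v) := fun w hw =>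
  let ⟨a, ha⟩ := hTnl _ hw
  ⟨a, by simpa [descTree] using ha⟩

theorem treeBoundary_nonempty (hT : IsTree T) (hTnl : HasNoLeaves T) :
    (treeBoundary T).Nonempty := by
  have : Nonempty Λ := let ⟨a, _⟩ := hTnl [] hT.1; ⟨a⟩
  choose! e he using hTnl
  let W : ℕ → List Λ := fun n => Nat.rec [] (fun _ w => w ++ [e w]) n
  have hW : ∀ n, W n = (List.ofFn fun k : Fin n => e (W k)) ∧ W n ∈ T := by
    intro n
    induction n with
    | zero => exact ⟨rfl, hT.1⟩
    | succ n ih =>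
      refine ⟨?_, he _ ih.2⟩
      rw [ofFn_succ_eq_append (fun k => e (W k)), ← ih.1]
  exact ⟨fun n => e (W n), fun n => (hW n).1 ▸ (hW n).2⟩

theorem tail_mem_treeBoundary_descTree {i : ℕ → Λ} (hi : i ∈ treeBoundary T) :
    (fun n => i (n + 1)) ∈ treeBoundary (descTree T [i 0]) := fun n => by
  have h := hi (n + 1)
  rw [ofFn_succ_eq_cons] at h
  exact h

theorem mem_treeBoundary_of_tail (hT : [] ∈ T) {i : ℕ → Λ}
    (hi : (fun n => i (n + 1)) ∈ treeBoundary (descTree T [i 0])) : i ∈ treeBoundary T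
  | 0 => hT
  | n + 1 => by
    rw [ofFn_succ_eq_cons]
    exact hi n

variable {Φ : Λ → Euc d → Euc d} {r : Λ → ℝ}

theorem treeProj_nonempty (hT : IsTree T) (hTnl : HasNoLeaves T) : (treeProj Φ T).Nonempty :=
  (treeBoundary_nonempty hT hTnl).image _

variable [Finite Λ] [Nonempty Λ] (hΦ : ∀ a, IsContractingSimilarity (Φ a) (r a))
include hΦ

theorem wordMap_mem_treeProj (hT : IsTree T) {v : List Λ} (hv : v ∈ T) {x : Euc d}
    (hx : x ∈ treeProj Φ (descTree T v)) : wordMap Φ v x ∈ treeProj Φ T := by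
  induction v generalizing T with
  | nil => exact hx
  | cons a v ih =>
    obtain ⟨j, hj, hjx⟩ :=
      ih (T := descTree T [a]) (isTree_descTree hT (hT.2 _ hv [a] ⟨v, rfl⟩)) hv hx
    refine ⟨Stream'.cons a j, mem_treeBoundary_of_tail hT.1 hj, ?_⟩
    exact (codeMap_eq_apply_tail hΦ _).trans (congrArg (Φ a) hjx)

/-- At the first letter where a code of `φ_v x` leaves `v`, the point would lie both in an open
copy `φ_u φ_b U` and in the closure of the disjoint copy `φ_u φ_a U`. -/
theorem mem_treeProj_descTree_of_wordMap_mem {U : Set (Euc d)} (hU : IsOSCSet Φ U)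
    {v : List Λ} {x : Euc d} (hx : x ∈ U) (h : wordMap Φ v x ∈ treeProj Φ T) :
    x ∈ treeProj Φ (descTree T v) := by
  have hmaps : ∀ a, MapsTo (Φ a) U U := fun a => mapsTo_iff_image_subset.mpr (hU.2.2.1 a)
  induction v generalizing T with
  | nil => exact h
  | cons b v ih =>
    obtain ⟨i, hi, hix⟩ := h
    rw [codeMap_eq_apply_tail hΦ] at hix
    by_cases hib : i 0 = b
    · subst hib
      exact ih ⟨_, tail_mem_treeBoundary_descTree hi, (hΦ _).2.2.injective (hΦ _).1 hix⟩
    · exfalso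
      have hcl : codeMap Φ (fun n => i (n + 1)) ∈ closure U :=
        codeMap_mem_of_mapsTo hΦ isClosed_closure
          (fun a => (hmaps a).closure (hΦ a).2.2.continuous) (subset_closure hx) _
      have hmem : wordMap Φ (b :: v) x ∈ closure (Φ (i 0) '' U) :=
        hix ▸ image_closure_subset_closure_image (hΦ _).2.2.continuous (mem_image_of_mem _ hcl)
      obtain ⟨z, hz⟩ := mem_closure_iff.mp hmem _ ((hΦ b).2.2.isOpen_image (hΦ b).1 hU.2.1)
        (mem_image_of_mem _ (mapsTo_wordMap hmaps v hx))
      exact (eq_empty_iff_forall_notMem.mp (hU.2.2.2 b (i 0) (Ne.symm hib))) z hz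

theorem inter_image_preimage_treeProj (hT : IsTree T) {U : Set (Euc d)} (hU : IsOSCSet Φ U)
    {v : List Λ} (hv : v ∈ T) {ψ : Euc d → Euc d} {W : Set (Euc d)} (hW : ψ ⁻¹' W ⊆ U) :
    W ∩ ψ '' (wordMap Φ v ⁻¹' treeProj Φ T) = W ∩ ψ '' treeProj Φ (descTree T v) := by
  rw [inter_comm W, inter_comm W, ← image_inter_preimage, ← image_inter_preimage]
  congr 1
  ext x
  exact ⟨fun ⟨hx, hxW⟩ => ⟨mem_treeProj_descTree_of_wordMap_mem hΦ hU (hW hxW) hx, hxW⟩,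
    fun ⟨hx, hxW⟩ => ⟨wordMap_mem_treeProj hΦ hT hv hx, hxW⟩⟩

end Tree

section Pieces

variable {d : ℕ} {Λ : Type} [Finite Λ] [Nonempty Λ] {Φ : Λ → Euc d → Euc d} {r : Λ → ℝ}

theorem exists_microset_image_eq_cube_inter (hΦ : ∀ a, IsContractingSimilarity (Φ a) (r a))
    {T : Set (List Λ)} (hT : IsTree T) (hTnl : HasNoLeaves T) {U : Set (Euc d)}
    (hU : IsOSCSet Φ U) {S : Set (Euc d)} (hS : inClosureBranchSets Φ T S)
    {ψ : Euc d → Euc d} {R : ℝ} (hR : 0 < R) (hψ : IsSimilarityWithRatio ψ R) {c : Euc d} {t : ℝ}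
    (ht : 0 < t) (htR : 4 * t ≤ R) (hcU : ψ ⁻¹' cube c (2 * t) ⊆ U)
    (hD : (cube c t ∩ ψ '' S).Nonempty) :
    ∃ A χ, IsMicroset (treeProj Φ T) A ∧ IsSimilarity χ ∧ χ '' A = cube c t ∩ ψ '' S := by
  obtain ⟨hSc, hSne, v, hvT, hv⟩ := hS
  obtain ⟨ε, hε, hεpos⟩ := exists_tendsto_zero_subset_thickening (fun n =>
    hausdorffEDist_ne_top_of_nonempty_of_bounded
      (treeProj_nonempty (isTree_descTree hT (hvT n)) (hasNoLeaves_descTree hTnl _)) hSne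
      (isBounded_treeProj hΦ _) hSc.isBounded) hv
  have hRε : Tendsto (fun n => R * ε n) atTop (𝓝 0) := by simpa using hε.const_mul R
  obtain ⟨N, hN⟩ := eventually_atTop.mp (hRε.eventually (ge_mem_nhds ht))
  choose g hg using fun n => (isSimilarityWithRatio_wordMap hΦ (v (n + N))).exists_inverse
    (wordRatio_pos hΦ _)
  set m : ℕ → ℝ := fun n => R * ε (n + N)
  have hexpand : ∀ n, 4 * t ≤ R * (wordRatio r (v (n + N)))⁻¹ := fun n =>
    htR.trans (le_mul_of_one_le_right hR.le
      ((one_le_inv₀ (wordRatio_pos hΦ _)).mpr (wordRatio_le_one hΦ _)))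
  have hwin : ∀ n, cube c (t + m n) ∩ (ψ ∘ g n) '' treeProj Φ T =
      cube c (t + m n) ∩ ψ '' treeProj Φ (descTree T (v (n + N))) := fun n => by
    rw [image_comp, image_eq_preimage_of_inverse (hg n).2.2 (hg n).2.1]
    refine inter_image_preimage_treeProj hΦ hT hU (hvT _)
      ((preimage_mono (cube_mono ?_)).trans hcU)
    linarith [hN _ (Nat.le_add_left N n)]
  have hclose : ∀ n, ψ '' treeProj Φ (descTree T (v (n + N))) ⊆ thickening (m n) (ψ '' S) ∧
      ψ '' S ⊆ thickening (m n) (ψ '' treeProj Φ (descTree T (v (n + N)))) := fun n =>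
    ⟨hψ.image_subset_thickening hR (hεpos _).2.1, hψ.image_subset_thickening hR (hεpos _).2.2⟩
  refine ⟨_, _, isMicroset_cubeChart_image ht (fun n => hψ.comp (hg n).1) hexpand
      ((tendsto_add_atTop_iff_nat N).mpr hRε) (fun n => (mul_pos hR (hεpos _).1).le)
      (fun n => hN _ (Nat.le_add_left N n)) hwin (hSc.image hψ.continuous) hclose hD,
    ⟨2 * t, by positivity, IsSimilarityWithRatio.smul_sub_add (by positivity) _ c⟩,
    (leftInverse_cubeChart c ht.ne').image_image _⟩

end Pieces

theorem exists_halfSide_pos_le (d : ℕ) {R δ : ℝ} (hR : 0 < R) (hδ : 0 < δ) :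
    ∃ t, 0 < t ∧ 4 * t ≤ R ∧ 2 * t ≤ 1 ∧ 4 * (√d * t) ≤ R * δ := by
  set κ := 4 * (√d + 1)
  have hκ : 4 ≤ κ := by linarith [Real.sqrt_nonneg d]
  refine ⟨min (1 / κ) (R * min 1 δ / κ), by positivity, ?_⟩
  have h1 := (le_div_iff₀ (by positivity)).mp (min_le_left (1 / κ) (R * min 1 δ / κ))
  have h2 := (le_div_iff₀ (by positivity)).mp (min_le_right (1 / κ) (R * min 1 δ / κ))
  have h0 : 0 < min (1 / κ) (R * min 1 δ / κ) := by positivity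
  refine ⟨?_, ?_, ?_⟩ <;> nlinarith [min_le_left 1 δ, min_le_right 1 δ, Real.sqrt_nonneg d]

theorem stmt12_general {d : ℕ} {Λ : Type} [Fintype Λ] [Nonempty Λ]
    (Φ : Λ → Euc d → Euc d) (r : Λ → ℝ)
    (hΦ : ∀ i, IsContractingSimilarity (Φ i) (r i))
    (F : Set (Euc d))
    (T : Set (List Λ)) (hT : IsTree T) (hTnl : HasNoLeaves T)
    (hFT : F = treeProj Φ T) :
    ∀ (S U : Set (Euc d)) (ψ : Euc d → Euc d),
      inClosureBranchSets Φ T S → IsSimilarity ψ → IsOSCSet Φ U →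
      ψ ⁻¹' unitCube d ∩ S ⊆ U →
      ∃ (k : ℕ) (A : Fin k → Set (Euc d)) (χ : Fin k → Euc d → Euc d),
        (∀ j, IsMicroset F (A j)) ∧ (∀ j, IsSimilarity (χ j)) ∧
        unitCube d ∩ ψ '' S = ⋃ j, χ j '' A j := by
  subst hFT
  intro S U ψ hS ⟨R, hR, hψ⟩ hU hSU
  obtain ⟨δ, hδ, hδU⟩ := (hS.1.inter_left (isClosed_unitCube.preimage hψ.continuous)
    ).exists_cthickening_subset_open hU.2.1 hSU
  obtain ⟨t, ht, htR, ht1, htδ⟩ := exists_halfSide_pos_le d hR hδ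
  obtain ⟨Y, hYC, hunion⟩ :=
    exists_finset_unitCube_inter_eq_biUnion (hS.1.image hψ.continuous) ht ht1
  have hpieces : ∀ y ∈ Y, ∃ A χ, IsMicroset (treeProj Φ T) A ∧ IsSimilarity χ ∧
      χ '' A = cube (clampCenter t y) t ∩ ψ '' S := by
    rintro _ hy
    obtain ⟨hyQ, s, hs, rfl⟩ := hYC _ hy
    refine exists_microset_image_eq_cube_inter hΦ hT hTnl hU hS hR hψ ht htR ?_
      ⟨_, mem_cube_clampCenter_self ht hyQ, s, hs, rfl⟩
    refine (hψ.preimage_cube_subset_cthickening hR (K := ψ ⁻¹' unitCube d ∩ S) (by positivity)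
      ⟨hyQ, hs⟩
      (cube_mono (by linarith) (mem_cube_clampCenter_self ht hyQ))).trans
      ((cthickening_mono ?_ _).trans hδU)
    rw [div_le_iff₀ hR]
    linarith
  choose! A χ hA hχ hAχ using hpieces
  refine ⟨Y.card, fun j => A (Y.equivFin.symm j), fun j => χ (Y.equivFin.symm j),
    fun j => hA _ (Y.equivFin.symm j).2, fun j => hχ _ (Y.equivFin.symm j).2, ?_⟩
  rw [hunion, Y.equivFin.symm.surjective.iUnion_comp (fun y : Y => χ y '' A y), iUnion_subtype]
  exact iUnion₂_congr fun y hy => (hAχ y hy).symm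

theorem stmt12 {d : ℕ} {Λ : Type} [Fintype Λ] [Nonempty Λ]
    (Φ : Λ → Euc d → Euc d) (r : Λ → ℝ)
    (hΦ : ∀ i, IsContractingSimilarity (Φ i) (r i))
    (hOSC : SatisfiesOSC Φ)
    (F : Set (Euc d)) (hFc : IsCompact F) (hFne : F.Nonempty)
    (T : Set (List Λ)) (hT : IsTree T) (hTnl : HasNoLeaves T)
    (hFT : F = treeProj Φ T) :
    ∀ (S U : Set (Euc d)) (ψ : Euc d → Euc d),
      inClosureBranchSets Φ T S → IsSimilarity ψ → IsOSCSet Φ U →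
      ψ ⁻¹' unitCube d ∩ S ⊆ U →
      ∃ (k : ℕ) (A : Fin k → Set (Euc d)) (χ : Fin k → Euc d → Euc d),
        (∀ j, IsMicroset F (A j)) ∧ (∀ j, IsSimilarity (χ j)) ∧
        unitCube d ∩ ψ '' S = ⋃ j, χ j '' A j :=
  stmt12_general Φ r hΦ F T hT hTnl hFT
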